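/- For any real vector bundle ξ over the complex Stiefel manifold V_k(ℂ^n) with 1 < k < n, if n - k is even or n - k ≠ 2^t - 1 for all t > 0, then w_{4(n-k)+4}(ξ) = 0; consequently no complex vector bundle η over V_k(ℂ^n) has c_{2(n-k)+2}(η) a generator of H^{4(n-k)+4}(V_k(ℂ^n); ℤ) ≅ ℤ. -/

import Mathlib

/-!
A real bundle whose Stiefel–Whitney classes do not all vanish up to degree `N` has its first
nonzero class in a degree `2 ^ s ≤ N`. Over `V_k(ℂ^n)` the mod-2 cohomology vanishes in degree `1`
and in all positive even degrees below `N = 4(n-k)+4`, so that degree can only be `N` itself; but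
`4(n-k)+4 = 2 ^ s` forces `n - k = 2 ^ (s-2) - 1`, which the hypothesis excludes. Hence
`w_N(ξ) = 0` for every `ξ`. A Chern class `c_{2(n-k)+2}(η)` generating `H^N(V; ℤ)` would reduce
to `w_N(η_ℝ) = 0`, while reduction mod 2 maps `H^N(V; ℤ)` onto `H^N(V; ℤ/2) ≠ 0`.
-/

lemma four_mul_add_four_ne_two_pow {d : ℕ} (hd : 0 < d)
    (h : Even d ∨ ∀ t : ℕ, 0 < t → d ≠ 2 ^ t - 1) (s : ℕ) : 4 * d + 4 ≠ 2 ^ s := by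
  intro hs
  have hs2 : 2 ≤ s := by
    by_contra! hs2
    interval_cases s <;> omega
  obtain ⟨t, rfl⟩ := Nat.exists_eq_add_of_le' hs2
  have hdt : d + 1 = 2 ^ t := by rw [pow_add] at hs; omega
  have ht : 0 < t := Nat.pos_of_ne_zero fun ht0 => by rw [ht0, pow_zero] at hdt; omega
  rcases h with hev | hne
  · have : Even (d + 1) := hdt ▸ (Nat.even_pow' ht.ne').mpr even_two
    exact Nat.even_add_one.mp this hev
  · exact hne t ht (by omega)

lemma eq_zero_of_first_ne_zero_two_pow {M : Type*} [Zero M] (w : ℕ → M)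
    (hfirst : ∀ m, 0 < m → (∀ j, 0 < j → j < m → w j = 0) → w m ≠ 0 → ∃ s : ℕ, m = 2 ^ s)
    {N : ℕ} (hN0 : 0 < N) (hN : ∀ s, N ≠ 2 ^ s) (hlow : ∀ s, 2 ^ s < N → w (2 ^ s) = 0) :
    w N = 0 := by
  classical
  by_contra hwN
  have hex : ∃ m, 0 < m ∧ w m ≠ 0 := ⟨N, hN0, hwN⟩
  obtain ⟨hm0, hm⟩ := Nat.find_spec hex
  have hmN : Nat.find hex ≤ N := Nat.find_le ⟨hN0, hwN⟩
  obtain ⟨s, hs⟩ := hfirst _ hm0 (fun j hj0 hjm => not_not.mp fun hj =>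
    Nat.find_min hex hjm ⟨hj0, hj⟩) hm
  rcases hmN.lt_or_eq with hlt | heq
  · exact hm (hs ▸ hlow s (hs ▸ hlt))
  · exact hN s (heq ▸ hs)

lemma eq_zero_of_deg_two_pow {B : Type*} [Zero B] {degB : ℕ → B → Prop} {d : ℕ} (hd : 0 < d)
    (hvanish₁ : ∀ j y, 0 < j → j < 2 * d + 1 → degB j y → y = 0)
    (hvanish₂ : ∀ j y, 0 < j → Even j → j < 4 * d + 4 → degB j y → y = 0)
    {s : ℕ} (hs : 2 ^ s < 4 * d + 4) {y : B} (hy : degB (2 ^ s) y) : y = 0 := by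
  rcases s with _ | s
  · exact hvanish₁ _ y one_pos (by omega) hy
  · exact hvanish₂ _ y (by positivity) ((Nat.even_pow' s.succ_ne_zero).mpr even_two) hs hy

theorem stiefel_no_generating_chern_class_general
    (n k : ℕ) (hkn : k < n)
    (hcase : Even (n - k) ∨ ∀ t : ℕ, 0 < t → n - k ≠ 2 ^ t - 1)
    (A : Type) [CommRing A]              -- H^*(V_k(ℂ^n); ℤ)
    (degA : ℕ → A → Prop)
    (B : Type) [CommRing B]              -- H^*(V_k(ℂ^n); ℤ/2)
    (degB : ℕ → B → Prop)
    (f : A →+* B)                        -- coefficient reduction mod 2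
    -- H^{4(n-k)+4}(V; ℤ) ≅ ℤ, with generator detected mod 2:
    (hred_surj : ∀ y : B, degB (4 * (n - k) + 4) y →
        ∃ x : A, degA (4 * (n - k) + 4) x ∧ f x = y)
    -- mod-2 cohomology vanishing from the exterior algebra structure:
    (hvanish₁ : ∀ j y, 0 < j → j < 2 * (n - k) + 1 → degB j y → y = 0)
    (hvanish₂ : ∀ j y, 0 < j → Even j → j < 4 * (n - k) + 4 → degB j y → y = 0)
    -- H^{4(n-k)+4}(V; ℤ/2) ≅ ℤ/2, nontrivial:
    (hB_ne : ∃ y : B, y ≠ 0 ∧ degB (4 * (n - k) + 4) y)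
    (RBundle : Type)                     -- real vector bundles over V
    (w : RBundle → ℕ → B)                -- Stiefel–Whitney classes
    (w_deg : ∀ ξ j, degB j (w ξ j))
    -- the first nonzero Stiefel–Whitney class occurs in a power-of-2 degree:
    (first_sw_pow_two : ∀ (ξ : RBundle) (m : ℕ), 0 < m →
        (∀ j, 0 < j → j < m → w ξ j = 0) → w ξ m ≠ 0 → ∃ s : ℕ, m = 2 ^ s)
    (CBundle : Type)                     -- complex vector bundles over V
    (c : CBundle → ℕ → A)                -- Chern classes
    (realify : CBundle → RBundle)        -- underlying real bundle η_ℝ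
    (red_chern : ∀ (η : CBundle) (i : ℕ), f (c η i) = w (realify η) (2 * i)) :
    (∀ ξ : RBundle, w ξ (4 * (n - k) + 4) = 0) ∧
    ∀ η : CBundle, ¬ (degA (4 * (n - k) + 4) (c η (2 * (n - k) + 2)) ∧
        (∀ x, degA (4 * (n - k) + 4) x → ∃ l : ℤ, x = l • c η (2 * (n - k) + 2)) ∧
        ∀ l : ℤ, l • c η (2 * (n - k) + 2) = 0 → l = 0) := by
  have hd : 0 < n - k := by omega
  have hw : ∀ ξ, w ξ (4 * (n - k) + 4) = 0 := fun ξ =>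
    eq_zero_of_first_ne_zero_two_pow (w ξ) (first_sw_pow_two ξ) (by omega)
      (four_mul_add_four_ne_two_pow hd hcase)
      fun _ hs => eq_zero_of_deg_two_pow hd hvanish₁ hvanish₂ hs (w_deg ξ _)
  refine ⟨hw, ?_⟩
  rintro η ⟨-, hgen, -⟩
  obtain ⟨y, hy0, hy⟩ := hB_ne
  obtain ⟨x, hx, rfl⟩ := hred_surj y hy
  obtain ⟨l, rfl⟩ := hgen x hx
  apply hy0
  rw [map_zsmul, red_chern, show 2 * (2 * (n - k) + 2) = 4 * (n - k) + 4 by ring, hw, smul_zero]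

theorem stiefel_no_generating_chern_class
    (n k : ℕ) (hk1 : 1 < k) (hkn : k < n)
    (hcase : Even (n - k) ∨ ∀ t : ℕ, 0 < t → n - k ≠ 2 ^ t - 1)
    (A : Type) [CommRing A]              -- H^*(V_k(ℂ^n); ℤ)
    (degA : ℕ → A → Prop)
    (B : Type) [CommRing B]              -- H^*(V_k(ℂ^n); ℤ/2)
    (degB : ℕ → B → Prop)
    (f : A →+* B)                        -- coefficient reduction mod 2
    (hf_deg : ∀ j x, degA j x → degB j (f x))
    -- H^{4(n-k)+4}(V; ℤ) ≅ ℤ, with generator detected mod 2: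
    (hred_surj : ∀ y : B, degB (4 * (n - k) + 4) y →
        ∃ x : A, degA (4 * (n - k) + 4) x ∧ f x = y)
    -- mod-2 cohomology vanishing from the exterior algebra structure:
    (hvanish₁ : ∀ j y, 0 < j → j < 2 * (n - k) + 1 → degB j y → y = 0)
    (hvanish₂ : ∀ j y, 0 < j → Even j → j < 4 * (n - k) + 4 → degB j y → y = 0)
    -- H^{4(n-k)+4}(V; ℤ/2) ≅ ℤ/2, nontrivial:
    (hB_ne : ∃ y : B, y ≠ 0 ∧ degB (4 * (n - k) + 4) y)
    (RBundle : Type)                     -- real vector bundles over V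
    (w : RBundle → ℕ → B)                -- Stiefel–Whitney classes
    (w_deg : ∀ ξ j, degB j (w ξ j))
    -- the first nonzero Stiefel–Whitney class occurs in a power-of-2 degree:
    (first_sw_pow_two : ∀ (ξ : RBundle) (m : ℕ), 0 < m →
        (∀ j, 0 < j → j < m → w ξ j = 0) → w ξ m ≠ 0 → ∃ s : ℕ, m = 2 ^ s)
    (CBundle : Type)                     -- complex vector bundles over V
    (c : CBundle → ℕ → A)                -- Chern classes
    (realify : CBundle → RBundle)        -- underlying real bundle η_ℝ
    (red_chern : ∀ (η : CBundle) (i : ℕ), f (c η i) = w (realify η) (2 * i)) :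
    (∀ ξ : RBundle, w ξ (4 * (n - k) + 4) = 0) ∧
    ∀ η : CBundle, ¬ (degA (4 * (n - k) + 4) (c η (2 * (n - k) + 2)) ∧
        (∀ x, degA (4 * (n - k) + 4) x → ∃ l : ℤ, x = l • c η (2 * (n - k) + 2)) ∧
        ∀ l : ℤ, l • c η (2 * (n - k) + 2) = 0 → l = 0) :=
  stiefel_no_generating_chern_class_general n k hkn hcase A degA B degB f hred_surj hvanish₁
    hvanish₂ hB_ne RBundle w w_deg first_sw_pow_two CBundle c realify red_chern
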